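/- If G is a permutation graph on n vertices, then the threshold dimension of G satisfies t(G) ≤ χ(Ḡ), where Ḡ is the complement of G and χ denotes chromatic number; that is, there exist χ(Ḡ) threshold graphs T₁, …, T_{χ(Ḡ)} on V(G) whose edge sets have union equal to E(G). -/

import Mathlib

/-- The permutation graph `G[Π]` on `Fin n`: `i ~ j` iff `(i-j)(Π⁻¹ i - Π⁻¹ j) < 0`. -/
def permGraph (n : ℕ) (π : Equiv.Perm (Fin n)) : SimpleGraph (Fin n) where
  Adj i j := ((i : ℤ) - (j : ℤ)) * ((π.symm i : ℤ) - ((π.symm j : ℤ))) < 0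
  symm := by
    constructor; intro i j h
    have e : ((j : ℤ) - (i : ℤ)) * ((π.symm j : ℤ) - (π.symm i : ℤ))
        = ((i : ℤ) - (j : ℤ)) * ((π.symm i : ℤ) - (π.symm j : ℤ)) := by ring
    simp only [e]
    exact h
  loopless := by constructor; intro i; simp

/-- A set of vertices is stable (independent) if no two of its members are adjacent. -/
def IsStableSet {V : Type*} (G : SimpleGraph V) (s : Set V) : Prop :=
  s.Pairwise fun a b => ¬ G.Adj a b

/-- A finite graph is a threshold graph if there are nonnegative vertex weights and a
threshold `t` such that a set of vertices is stable iff its total weight is at most `t`. -/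
def IsThresholdGraph {V : Type*} [Fintype V] (G : SimpleGraph V) : Prop :=
  ∃ (w : V → ℝ) (t : ℝ), (∀ v, 0 ≤ w v) ∧
    ∀ U : Finset V, ((∑ v ∈ U, w v) ≤ t ↔ IsStableSet G ↑U)

/-- A graph is a permutation graph if it is isomorphic to `permGraph n π` for some
permutation `π` of `Fin n`. -/
def IsPermutationGraph {V : Type*} (G : SimpleGraph V) : Prop :=
  ∃ (n : ℕ) (π : Equiv.Perm (Fin n)), Nonempty (G ≃g permGraph n π)

/-- The threshold dimension of `G`: the least `k` such that the edge set of `G` is the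
union of the edge sets of `k` threshold graphs on `V(G)`. -/
noncomputable def thresholdDim {V : Type*} [Fintype V] (G : SimpleGraph V) : ℕ :=
  sInf {k | ∃ T : Fin k → SimpleGraph V,
    (∀ i, IsThresholdGraph (T i)) ∧ (⋃ i, (T i).edgeSet) = G.edgeSet}

/-- The independence number `α(G)`. -/
noncomputable def alphaNum {V : Type*} [Fintype V] (G : SimpleGraph V) : ℕ :=
  sSup {k | ∃ s : Finset V, s.card = k ∧ IsStableSet G ↑s}

/-- The graph `mK₂`: a perfect matching on `2m` vertices. -/
def matchingGraph (m : ℕ) : SimpleGraph (Fin m × Bool) where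
  Adj a b := a.1 = b.1 ∧ a.2 ≠ b.2
  symm := by constructor; rintro a b ⟨h1, h2⟩; exact ⟨h1.symm, h2.symm⟩
  loopless := by constructor; rintro a ⟨h1, h2⟩; exact h2 rfl

/-!
In the natural order of `Fin n` a permutation graph is transitively oriented: `u < a < b` with
`u ~ a ~ b` forces `u ~ b`. A colour class `K` of `Ḡ` is a clique of `G`; let `T_K` consist of the
edges of `G` whose larger endpoint lies in `K`. Then `T_K` is a split graph (`K` a clique, the rest
independent) in which every outside vertex sees an up-set of `K`, so these neighbourhoods are
nested, and a split graph with nested neighbourhoods is a threshold graph. Every edge of `G` lies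
in `T_K` for the class `K` of its larger endpoint.
-/

open Finset SimpleGraph

section Threshold

variable {V : Type*} [Fintype V]

theorem isThresholdGraph_of_lt_add_of_sum_le (H : SimpleGraph V) (w : V → ℝ) (t : ℝ)
    (hw : ∀ v, 0 ≤ w v) (hadj : ∀ x y, H.Adj x y → t < w x + w y)
    (hstable : ∀ U : Finset V, IsStableSet H U → ∑ v ∈ U, w v ≤ t) : IsThresholdGraph H := by
  classical
  refine ⟨w, t, hw, fun U => ⟨fun hU x hx y hy hne hxy => ?_, hstable U⟩⟩
  have hpair : w x + w y ≤ ∑ v ∈ U, w v := by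
    rw [← sum_pair hne]
    exact sum_le_sum_of_subset_of_nonneg
      (insert_subset_iff.mpr ⟨hx, singleton_subset_iff.mpr hy⟩) fun v _ _ => hw v
  linarith [hadj x y hxy]

theorem isThresholdGraph_of_adj_iff_lt (H : SimpleGraph V) (K : Set V) (hK : H.IsClique K)
    (hI : H.IsIndepSet Kᶜ) (κ ι : V → ℕ) (hrank : ∀ u ∉ K, ∀ b ∈ K, H.Adj u b ↔ κ b < ι u) :
    IsThresholdGraph H := by
  classical
  set N := Fintype.card V
  set B : ℝ := N + 1
  set R := univ.sup fun v => max (κ v) (ι v)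
  have hB : (1 : ℝ) ≤ B := by simp [B]
  have hNB (m : ℕ) : (N : ℝ) * B ^ m < B ^ (m + 1) := by
    rw [pow_succ']; exact mul_lt_mul_of_pos_right (by simp [B]) (by positivity)
  have hR (v : V) : max (κ v) (ι v) ≤ R := le_sup (f := fun v => max (κ v) (ι v)) (mem_univ v)
  set T : ℝ := 2 * B ^ (R + 1)
  -- `T - N * B ^ κ b` leaves room for up to `N` vertices `u ∉ K` with `ι u ≤ κ b`, while a
  -- single one with `ι u > κ b` already overflows it, as `N < B`
  set w : V → ℝ := fun v => if v ∈ K then T - N * B ^ κ v else B ^ ι v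
  have hwK (b : V) (hb : b ∈ K) : w b = T - N * B ^ κ b := if_pos hb
  have hwI (u : V) (hu : u ∉ K) : w u = B ^ ι u := if_neg hu
  have hwK_gt (b : V) (hb : b ∈ K) : B ^ (R + 1) < w b := by
    have := (hNB (κ b)).trans_le <|
      pow_le_pow_right₀ hB (Nat.add_le_add_right ((le_max_left _ _).trans (hR b)) 1)
    rw [hwK b hb]; linarith
  have hw (v : V) : 0 ≤ w v := by
    by_cases hv : v ∈ K
    · exact (hwK_gt v hv).le.trans' (by positivity)
    · rw [hwI v hv]; positivity
  have hsum_le (S : Finset V) (m : ℕ) (hS : ∀ u ∈ S, u ∉ K ∧ ι u ≤ m) :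
      ∑ u ∈ S, w u ≤ N * B ^ m := by
    calc ∑ u ∈ S, w u ≤ S.card • B ^ m := sum_le_card_nsmul _ _ _ fun u hu => by
            rw [hwI u (hS u hu).1]; exact pow_le_pow_right₀ hB (hS u hu).2
      _ ≤ N * B ^ m := by
            rw [nsmul_eq_mul]; gcongr; exact_mod_cast card_le_univ S
  have hedge_mixed (b u : V) (hb : b ∈ K) (hu : u ∉ K) (hub : H.Adj u b) : T < w b + w u := by
    have := (hNB (κ b)).trans_le (pow_le_pow_right₀ hB ((hrank u hu b hb).mp hub))
    rw [hwK b hb, hwI u hu]; linarith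
  have hedge (x y : V) (hxy : H.Adj x y) : T < w x + w y := by
    by_cases hx : x ∈ K <;> by_cases hy : y ∈ K
    · linarith [hwK_gt x hx, hwK_gt y hy]
    · exact hedge_mixed x y hx hy hxy.symm
    · rw [add_comm]; exact hedge_mixed y x hy hx hxy
    · exact absurd hxy (hI hx hy hxy.ne)
  refine isThresholdGraph_of_lt_add_of_sum_le H w T hw hedge fun U hU => ?_
  by_cases hUK : ∃ b ∈ U, b ∈ K
  · obtain ⟨b, hbU, hbK⟩ := hUK
    have hrest (u : V) (hu : u ∈ U.erase b) : u ∉ K ∧ ι u ≤ κ b := by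
      obtain ⟨hub, huU⟩ := mem_erase.mp hu
      have hnadj : ¬ H.Adj u b := hU huU hbU hub
      have huK : u ∉ K := fun huK => hnadj (hK huK hbK hub)
      exact ⟨huK, not_lt.mp fun h => hnadj ((hrank u huK b hbK).mpr h)⟩
    rw [← add_sum_erase U w hbU, hwK b hbK]
    linarith [hsum_le _ _ hrest]
  · push Not at hUK
    have hιR (u : V) : ι u ≤ R := (le_max_right _ _).trans (hR u)
    linarith [hsum_le U R fun u hu => ⟨hUK u hu, hιR u⟩, hNB R,
      pow_pos (zero_lt_one.trans_le hB) (R + 1)]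

theorem isThresholdGraph_of_neighborSet_nested (H : SimpleGraph V) (K : Set V)
    (hK : H.IsClique K) (hI : H.IsIndepSet Kᶜ)
    (hnest : ∀ u ∉ K, ∀ v ∉ K,
      H.neighborSet u ⊆ H.neighborSet v ∨ H.neighborSet v ⊆ H.neighborSet u) :
    IsThresholdGraph H := by
  classical
  let ι (u : V) : ℕ := (H.neighborSet u).ncard
  -- by nestedness, `u ∉ K` sees `b ∈ K` iff it has more neighbours than any `v ∉ K` missing `b`
  let κ (b : V) : ℕ := (univ.filter fun v => v ∉ K ∧ ¬ H.Adj v b).sup ι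
  refine isThresholdGraph_of_adj_iff_lt H K hK hI κ ι fun u hu b _ => ⟨fun hub => ?_, fun hlt => ?_⟩
  · refine (Finset.sup_lt_iff ((Set.ncard_pos (Set.toFinite _)).mpr ⟨b, hub⟩)).mpr fun v hv => ?_
    obtain ⟨hvK, hvb⟩ := (mem_filter.mp hv).2
    refine Set.ncard_lt_ncard ((hnest v hvK u hu).elim (fun h => ⟨h, fun h' => hvb (h' hub)⟩)
      fun h => absurd (h hub) hvb)
  · by_contra hnadj
    exact hlt.not_ge (le_sup (f := ι) (mem_filter.mpr ⟨mem_univ u, hu, hnadj⟩))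

end Threshold

section UpperStar

variable {V : Type*} [LinearOrder V]

def upperStar (G : SimpleGraph V) (K : Set V) : SimpleGraph V where
  Adj a b := G.Adj a b ∧ max a b ∈ K
  symm := ⟨fun a b h => ⟨h.1.symm, max_comm a b ▸ h.2⟩⟩
  loopless := ⟨fun a h => G.loopless.irrefl a h.1⟩

variable {G : SimpleGraph V} {K : Set V}

theorem upperStar_adj {a b : V} : (upperStar G K).Adj a b ↔ G.Adj a b ∧ max a b ∈ K := Iff.rfl

theorem upperStar_adj_of_notMem {u b : V} (hu : u ∉ K) :
    (upperStar G K).Adj u b ↔ G.Adj u b ∧ u < b ∧ b ∈ K := by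
  rw [upperStar_adj]
  refine ⟨fun ⟨hub, hmax⟩ => ?_, fun ⟨hub, hlt, hb⟩ => ⟨hub, (max_eq_right hlt.le).symm ▸ hb⟩⟩
  rcases le_total u b with hle | hle
  · exact ⟨hub, hle.lt_of_ne hub.ne, max_eq_right hle ▸ hmax⟩
  · exact absurd (max_eq_left hle ▸ hmax) hu

theorem isThresholdGraph_upperStar [Fintype V]
    (htrans : ∀ u a b, u < a → a < b → G.Adj u a → G.Adj a b → G.Adj u b)
    (hK : G.IsClique K) : IsThresholdGraph (upperStar G K) := by
  have hup {u b b' : V} (hu : u ∉ K) (hub : (upperStar G K).Adj u b) (hbb' : b ≤ b')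
      (hb' : b' ∈ K) : (upperStar G K).Adj u b' := by
    obtain ⟨hub, hlt, hb⟩ := (upperStar_adj_of_notMem hu).mp hub
    rcases hbb'.eq_or_lt with rfl | hbb'
    · exact (upperStar_adj_of_notMem hu).mpr ⟨hub, hlt, hb⟩
    exact (upperStar_adj_of_notMem hu).mpr
      ⟨htrans u b b' hlt hbb' hub (hK hb hb' hbb'.ne), hlt.trans hbb', hb'⟩
  refine isThresholdGraph_of_neighborSet_nested _ K ?_ ?_ fun u hu v hv => ?_
  · intro a ha b hb hab
    refine upperStar_adj.mpr ⟨hK ha hb hab, ?_⟩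
    rcases max_choice a b with h | h <;> rw [h] <;> assumption
  · intro a ha b hb _ hab
    have hmax := (upperStar_adj.mp hab).2
    rcases max_choice a b with h | h <;> rw [h] at hmax
    exacts [ha hmax, hb hmax]
  by_contra! h
  obtain ⟨⟨b, hub, hvb⟩, ⟨b', hvb', hub'⟩⟩ := And.imp Set.not_subset.mp Set.not_subset.mp h
  rcases le_total b b' with hle | hle
  · exact hub' (hup hu hub hle ((upperStar_adj_of_notMem hv).mp hvb').2.2)
  · exact hvb (hup hv hvb' hle ((upperStar_adj_of_notMem hu).mp hub).2.2)

end UpperStar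

section Cover

variable {V W ι : Type*} [Fintype V] [Fintype W]

def IsThresholdCover (G : SimpleGraph V) (T : ι → SimpleGraph V) : Prop :=
  (∀ i, IsThresholdGraph (T i)) ∧ ⋃ i, (T i).edgeSet = G.edgeSet

theorem thresholdDim_le_of_isThresholdCover {G : SimpleGraph V} {k : ℕ}
    {T : Fin k → SimpleGraph V} (hT : IsThresholdCover G T) : thresholdDim G ≤ k :=
  Nat.sInf_le ⟨T, hT⟩

theorem IsThresholdGraph.comap {H : SimpleGraph W} (hH : IsThresholdGraph H) (e : V ≃ W) :
    IsThresholdGraph (H.comap e) := by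
  obtain ⟨w, t, hw, hwt⟩ := hH
  refine ⟨fun v => w (e v), t, fun v => hw (e v), fun U => ?_⟩
  have hsum : ∑ v ∈ U, w (e v) = ∑ x ∈ U.map e.toEmbedding, w x :=
    (sum_map U e.toEmbedding w).symm
  rw [hsum, hwt, IsStableSet, coe_map,
    Equiv.coe_toEmbedding, e.injective.injOn.pairwise_image]
  rfl

theorem IsThresholdCover.comap {G : SimpleGraph V} {H : SimpleGraph W} {T : ι → SimpleGraph W}
    (hT : IsThresholdCover H T) (e : G ≃g H) : IsThresholdCover G fun i => (T i).comap e := by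
  refine ⟨fun i => (hT.1 i).comap e.toEquiv, Set.ext fun s => ?_⟩
  induction s using Sym2.ind with
  | _ a b =>
    have := Set.ext_iff.mp hT.2 s(e a, e b)
    simp only [Set.mem_iUnion, mem_edgeSet, comap_adj] at this ⊢
    exact this.trans e.map_adj_iff

theorem isThresholdCover_upperStar [LinearOrder V] {G : SimpleGraph V}
    (htrans : ∀ u a b, u < a → a < b → G.Adj u a → G.Adj a b → G.Adj u b)
    (K : ι → Set V) (hK : ∀ i, G.IsClique (K i)) (hcover : ∀ v, ∃ i, v ∈ K i) :
    IsThresholdCover G fun i => upperStar G (K i) := by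
  refine ⟨fun i => isThresholdGraph_upperStar htrans (hK i), Set.ext fun s => ?_⟩
  induction s using Sym2.ind with
  | _ a b =>
    simp only [Set.mem_iUnion, mem_edgeSet, upperStar_adj]
    exact ⟨fun ⟨_, hab, _⟩ => hab, fun hab => (hcover (max a b)).imp fun _ h => ⟨hab, h⟩⟩

end Cover

theorem permGraph_adj_iff_of_lt {n : ℕ} (π : Equiv.Perm (Fin n)) {i j : Fin n} (hij : i < j) :
    (permGraph n π).Adj i j ↔ π.symm j < π.symm i := by
  have : (i : ℤ) < j := by exact_mod_cast hij
  simp only [permGraph, mul_neg_iff, Fin.lt_def]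
  omega

theorem permGraph_adj_trans {n : ℕ} (π : Equiv.Perm (Fin n)) {u a b : Fin n} (hua : u < a)
    (hab : a < b) (hu : (permGraph n π).Adj u a) (hb : (permGraph n π).Adj a b) :
    (permGraph n π).Adj u b :=
  (permGraph_adj_iff_of_lt π (hua.trans hab)).mpr
    (((permGraph_adj_iff_of_lt π hab).mp hb).trans ((permGraph_adj_iff_of_lt π hua).mp hu))

/-- Theorem: if `G` is a permutation graph then `t(G) ≤ χ(Ḡ)`. -/
theorem thresholdDim_le_chromaticNumber_compl
    {V : Type*} [Fintype V] (G : SimpleGraph V)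
    (hG : IsPermutationGraph G) :
    (thresholdDim G : ℕ∞) ≤ Gᶜ.chromaticNumber := by
  obtain ⟨n, π, ⟨e⟩⟩ := hG
  refine le_chromaticNumber_iff_coloring.mpr fun k C => ?_
  let K (i : Fin k) : Set (Fin n) := e.symm ⁻¹' C.colorClass i
  have hK (i : Fin k) : (permGraph n π).IsClique (K i) := fun a ha b hb hab =>
    e.symm.map_adj_iff.mp <|
      (isIndepSet_compl G).mp (C.isIndepSet_colorClass i) ha hb (e.symm.injective.ne hab)
  have hcover : IsThresholdCover (permGraph n π) fun i => upperStar (permGraph n π) (K i) :=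
    isThresholdCover_upperStar (fun _ _ _ => permGraph_adj_trans π) K hK
      fun v => ⟨C (e.symm v), C.mem_colorClass _⟩
  exact_mod_cast thresholdDim_le_of_isThresholdCover (hcover.comap e)
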